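/- For ω > 0, (ω³/(6π)) ∫₀^{2π/ω} ∫₀^τ ∫₀^s sin(ωτ)(cos(2ωs) sin(ωp) - sin(ωs) cos(2ωp)) dp ds dτ = -1/8. -/

import Mathlib

/-!
Substituting `x = ω τ` in all three variables scales the iterated integral by `ω⁻³` and turns its
domain into `0 ≤ p ≤ s ≤ τ ≤ 2π`, so it suffices to treat `ω = 1`. There the double-angle
formulas collapse the inner integral to `cos 2s - cos³ s`, the middle one to
`sin 2τ / 2 - sin τ + sin³ τ / 3`, and over a full period the outer integrand
`sin² τ cos τ - sin² τ + sin⁴ τ / 3` integrates to `0 - π + π / 4 = -3π / 4`.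
-/

open Real intervalIntegral

theorem integral_zero_comp_mul_left (g : ℝ → ℝ) {c : ℝ} (hc : c ≠ 0) (b : ℝ) :
    ∫ x in (0:ℝ)..b, g (c * x) = c⁻¹ * ∫ x in (0:ℝ)..c * b, g x := by
  simp [integral_comp_mul_left g hc]

theorem integral_integral_integral_comp_mul_left (f : ℝ → ℝ → ℝ → ℝ) {c : ℝ} (hc : c ≠ 0)
    (T : ℝ) :
    ∫ τ in (0:ℝ)..T / c, ∫ s in (0:ℝ)..τ, ∫ p in (0:ℝ)..s, f (c * τ) (c * s) (c * p) =
      (c ^ 3)⁻¹ * ∫ τ in (0:ℝ)..T, ∫ s in (0:ℝ)..τ, ∫ p in (0:ℝ)..s, f τ s p := by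
  calc _ = ∫ τ in (0:ℝ)..T / c, ∫ s in (0:ℝ)..τ,
          c⁻¹ * ∫ p in (0:ℝ)..c * s, f (c * τ) (c * s) p := by
        simp only [integral_zero_comp_mul_left (f _ _) hc]
    _ = ∫ τ in (0:ℝ)..T / c, c⁻¹ * ∫ s in (0:ℝ)..c * τ,
          c⁻¹ * ∫ p in (0:ℝ)..s, f (c * τ) s p :=
        integral_congr fun τ _ =>
          integral_zero_comp_mul_left (fun s => c⁻¹ * ∫ p in (0:ℝ)..s, f (c * τ) s p) hc τ
    _ = c⁻¹ * ∫ τ in (0:ℝ)..c * (T / c), c⁻¹ * ∫ s in (0:ℝ)..τ,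
          c⁻¹ * ∫ p in (0:ℝ)..s, f τ s p :=
        integral_zero_comp_mul_left
          (fun τ => c⁻¹ * ∫ s in (0:ℝ)..τ, c⁻¹ * ∫ p in (0:ℝ)..s, f τ s p) hc (T / c)
    _ = _ := by
        simp only [integral_const_mul, mul_div_cancel₀ T hc]
        ring

theorem integral_cos_two_mul_mul_sin_sub_sin_mul_cos_two_mul (s : ℝ) :
    ∫ p in (0:ℝ)..s, (cos (2 * s) * sin p - sin s * cos (2 * p)) = cos (2 * s) - cos s ^ 3 := by
  rw [integral_sub (Continuous.intervalIntegrable (by fun_prop) _ _)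
      (Continuous.intervalIntegrable (by fun_prop) _ _),
    integral_const_mul, integral_const_mul, integral_sin,
    integral_zero_comp_mul_left cos two_ne_zero, integral_cos, cos_two_mul, sin_two_mul]
  simp only [cos_zero, sin_zero]
  linear_combination (-cos s) * sin_sq_add_cos_sq s

theorem integral_cos_two_mul_sub_cos_pow_three (τ : ℝ) :
    ∫ s in (0:ℝ)..τ, (cos (2 * s) - cos s ^ 3) = sin (2 * τ) / 2 - sin τ + sin τ ^ 3 / 3 := by
  rw [integral_sub (Continuous.intervalIntegrable (by fun_prop) _ _)
      (Continuous.intervalIntegrable (by fun_prop) _ _),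
    integral_zero_comp_mul_left cos two_ne_zero, integral_cos, integral_cos_pow_three]
  simp only [sin_zero]
  ring

theorem integral_zero_two_pi_sin_mul_sin_two_mul_div_two_sub_sin_add_sin_pow_three :
    ∫ τ in (0:ℝ)..2 * π, sin τ * (sin (2 * τ) / 2 - sin τ + sin τ ^ 3 / 3) = -(3 * π / 4) := by
  have expand : ∀ τ, sin τ * (sin (2 * τ) / 2 - sin τ + sin τ ^ 3 / 3) =
      sin τ ^ 2 * cos τ - sin τ ^ 2 + sin τ ^ (2 + 2) / 3 := by
    intro τ
    rw [sin_two_mul]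
    ring
  simp only [expand]
  rw [integral_add (Continuous.intervalIntegrable (by fun_prop) _ _)
      (Continuous.intervalIntegrable (by fun_prop) _ _),
    integral_sub (Continuous.intervalIntegrable (by fun_prop) _ _)
      (Continuous.intervalIntegrable (by fun_prop) _ _),
    integral_div, integral_sin_pow 2, integral_sin_sq_mul_cos, integral_sin_sq]
  norm_num [sin_two_pi, cos_two_pi]
  ring

theorem integral_integral_integral_sin_mul_cos_two_mul_sin_sub :
    ∫ τ in (0:ℝ)..2 * π, ∫ s in (0:ℝ)..τ, ∫ p in (0:ℝ)..s,
      sin τ * (cos (2 * s) * sin p - sin s * cos (2 * p)) = -(3 * π / 4) := by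
  simp only [integral_const_mul, integral_cos_two_mul_mul_sin_sub_sin_mul_cos_two_mul,
    integral_cos_two_mul_sub_cos_pow_three]
  exact integral_zero_two_pi_sin_mul_sin_two_mul_div_two_sub_sin_add_sin_pow_three

theorem stmt_8 (ω : ℝ) (hω : 0 < ω) :
    (ω ^ 3 / (6 * π)) *
      ∫ τ in (0:ℝ)..(2 * π / ω), ∫ s in (0:ℝ)..τ, ∫ p in (0:ℝ)..s,
        Real.sin (ω * τ) *
          (Real.cos (2 * ω * s) * Real.sin (ω * p) -
           Real.sin (ω * s) * Real.cos (2 * ω * p)) = -1/8 := by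
  simp only [mul_assoc (2 : ℝ) ω]
  rw [integral_integral_integral_comp_mul_left
      (fun τ s p => sin τ * (cos (2 * s) * sin p - sin s * cos (2 * p))) hω.ne',
    integral_integral_integral_sin_mul_cos_two_mul_sin_sub]
  field_simp
  ring
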